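/- For μ ∈ (0,1), the point α = ((μ,0),(−μ,0)) ∈ 𝓕₂(B₁(0)) is a critical point of the disc 2-vortex Hamiltonian 𝓗 (that is, ∇𝓗(α) = 0) if and only if μ⁴ = 1 − 4μ². In particular μ = √(√5 − 2) gives a critical point. -/

import Mathlib

noncomputable section

open Real

/-- The plane `ℝ²` with its Euclidean structure. -/
abbrev R2 : Type := EuclideanSpace ℝ (Fin 2)

/-- The standard symplectic matrix `J` (rotation by `-π/2`): `J(x₁,x₂) = (x₂,-x₁)`. -/
def Jrot (x : R2) : R2 := (WithLp.equiv 2 (Fin 2 → ℝ)).symm ![x 1, -(x 0)]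

/-- The rotation `e^{θJ}` of the plane. -/
def rotate (θ : ℝ) (x : R2) : R2 :=
  (WithLp.equiv 2 (Fin 2 → ℝ)).symm
    ![Real.cos θ * x 0 + Real.sin θ * x 1, -Real.sin θ * x 0 + Real.cos θ * x 1]

/-- The point `(x₁,x₂) ∈ ℝ²`. -/
def vec (x₁ x₂ : ℝ) : R2 := (WithLp.equiv 2 (Fin 2 → ℝ)).symm ![x₁, x₂]

/-- The regular part of the Dirichlet Green's function of the unit disc. -/
def discg (x y : R2) : ℝ :=
  -(1 / (4 * π)) * Real.log (‖x‖ ^ 2 * ‖y‖ ^ 2 - 2 * (inner ℝ x y : ℝ) + 1)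

/-- The disc `2`-vortex Hamiltonian `𝓗` with vorticities `Γ¹ = 1`, `Γ² = -1`. -/
def discHam (x y : R2) : ℝ :=
  (1 / π) * (Real.log ‖x - y‖
      - 1 / 2 * Real.log (‖x‖ ^ 2 * ‖y‖ ^ 2 - 2 * (inner ℝ x y : ℝ) + 1))
    + 1 / (2 * π) * (Real.log (1 - ‖x‖ ^ 2) + Real.log (1 - ‖y‖ ^ 2))

/-- The disc `2`-vortex Hamiltonian as a function on `(ℝ²)²`. -/
def discHamV (a : Fin 2 → R2) : ℝ := discHam (a 0) (a 1)

/-- Partial gradient `∇_{zᵢ} f(z) ∈ ℝ²` of a function of several planar variables. -/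
def pgrad {ι : Type*} [DecidableEq ι] (f : (ι → R2) → ℝ) (z : ι → R2) (i : ι) : R2 :=
  gradient (fun p => f (Function.update z i p)) (z i)

/-- Kernel of the Hessian `∇²f(z)` viewed as a map into the dual space. -/
def hessKer {ι : Type*} [Fintype ι] (f : (ι → R2) → ℝ) (z : ι → R2) :
    Submodule ℝ (ι → R2) :=
  LinearMap.ker (fderiv ℝ (fderiv ℝ f) z : (ι → R2) →ₗ[ℝ] ((ι → R2) →L[ℝ] ℝ))

/-- Reflection at the unit circle, `R(y) = y/|y|²`. -/
def Rmap (y : R2) : R2 := (‖y‖ ^ 2)⁻¹ • y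

/-! Both partial gradients at `((μ,0),(-μ,0))` point along the horizontal axis, and by the
symmetry `𝓗(x,y) = 𝓗(y,x)` they are `±(1/π) F(μ) e₁` with `F = axialForce`,
`F(μ) = 1/(2μ) - μ/(1+μ²) - μ/(1-μ²) = (1 - 4μ² - μ⁴) / (2μ(1 - μ⁴))`.
The value `μ² = √5 - 2` is the positive root of `t² + 4t - 1`. -/

lemma vec_apply_zero (a b : ℝ) : vec a b 0 = a := rfl

lemma vec_apply_one (a b : ℝ) : vec a b 1 = b := rfl

lemma vec_sub (a b c d : ℝ) : vec a b - vec c d = vec (a - c) (b - d) := by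
  ext i; fin_cases i <;> rfl

lemma smul_vec (c a b : ℝ) : c • vec a b = vec (c * a) (c * b) := by
  ext i; fin_cases i <;> rfl

lemma vec_eq_zero_iff {a b : ℝ} : vec a b = 0 ↔ a = 0 ∧ b = 0 := by
  constructor
  · intro h
    exact ⟨congrArg (· 0) h, congrArg (· 1) h⟩
  · rintro ⟨rfl, rfl⟩
    ext i; fin_cases i <;> rfl

lemma inner_vec_left (a b : ℝ) (h : R2) : (inner ℝ (vec a b) h : ℝ) = a * h 0 + b * h 1 := by
  simp [vec, PiLp.inner_apply, Fin.sum_univ_two, mul_comm]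

lemma norm_vec_sq (a b : ℝ) : ‖vec a b‖ ^ 2 = a ^ 2 + b ^ 2 := by
  rw [← real_inner_self_eq_norm_sq, inner_vec_left, vec_apply_zero, vec_apply_one]
  ring

lemma discHam_comm (x y : R2) : discHam x y = discHam y x := by
  unfold discHam
  rw [norm_sub_rev, real_inner_comm y x, mul_comm (‖y‖ ^ 2)]
  ring

lemma pgrad_discHamV_zero (x y : R2) :
    pgrad discHamV ![x, y] 0 = gradient (fun p => discHam p y) x := by
  unfold pgrad
  congr

lemma pgrad_discHamV_one (x y : R2) :
    pgrad discHamV ![x, y] 1 = gradient (fun p => discHam p x) y := by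
  unfold pgrad
  congr
  ext p
  simp [discHamV, discHam_comm p]

lemma hasGradientAt_discHam_left {x y : R2} (hxy : x ≠ y)
    (hD : ‖x‖ ^ 2 * ‖y‖ ^ 2 - 2 * (inner ℝ x y : ℝ) + 1 ≠ 0) (hx : ‖x‖ ^ 2 ≠ 1) :
    HasGradientAt (fun p => discHam p y)
      ((1 / π) • ((‖x - y‖ ^ 2)⁻¹ • (x - y)
        - (‖x‖ ^ 2 * ‖y‖ ^ 2 - 2 * (inner ℝ x y : ℝ) + 1)⁻¹ • (‖y‖ ^ 2 • x - y)
        - (1 - ‖x‖ ^ 2)⁻¹ • x)) x := by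
  have hdist : ‖x - y‖ ^ 2 ≠ 0 := by simpa [sub_eq_zero] using hxy
  have hdisc : 1 - ‖x‖ ^ 2 ≠ 0 := sub_ne_zero.2 (Ne.symm hx)
  have hnorm := (hasFDerivAt_id x).norm_sq
  have hlogDist : HasFDerivAt (fun p : R2 => Real.log ‖p - y‖)
      ((1 / 2 : ℝ) • (‖x - y‖ ^ 2)⁻¹ • (2 • innerSL ℝ (x - y))) x := by
    have := (((hasFDerivAt_id x).sub_const y).norm_sq.log hdist).const_mul (1 / 2)
    refine (this.congr_of_eventuallyEq (.of_forall fun p => ?_)).congr_fderiv ?_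
    · simp [Real.log_pow]
    · ext h; simp
  have hlogD := (((hnorm.mul_const (‖y‖ ^ 2)).sub
      (((hasFDerivAt_id x).inner ℝ (hasFDerivAt_const y x)).const_mul 2)).add_const 1).log hD
  have hlogB := ((hnorm.const_sub 1).log hdisc).add_const (Real.log (1 - ‖y‖ ^ 2))
  rw [hasGradientAt_iff_hasFDerivAt]
  refine (((hlogDist.sub (hlogD.const_mul (1 / 2))).const_mul (1 / π)).add
    (hlogB.const_mul (1 / (2 * π)))).congr_fderiv ?_
  ext h
  simp only [one_div, map_sub, id_eq, real_inner_comm, Pi.sub_apply, ContinuousLinearMap.comp_id,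
    mul_inv_rev, smul_neg, add_apply, smul_apply, sub_apply, coe_innerSL_apply, nsmul_eq_mul, Nat.cast_ofNat, smul_eq_mul,
    ContinuousLinearMap.comp_apply, ContinuousLinearMap.prod_apply, ContinuousLinearMap.id_apply,
    zero_apply, fderivInnerCLM_apply, inner_zero_right, zero_add,
    neg_apply, map_smul, InnerProductSpace.toDual_apply_apply]
  field_simp
  ring

def axialForce (m : ℝ) : ℝ := 1 / (2 * m) - m / (1 + m ^ 2) - m / (1 - m ^ 2)

lemma axialForce_neg (m : ℝ) : axialForce (-m) = -axialForce m := by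
  simp only [axialForce, neg_sq, mul_neg, div_neg, neg_div]
  ring

lemma axialForce_eq_zero_iff {m : ℝ} (hm0 : m ≠ 0) (hm1 : m ^ 2 ≠ 1) :
    axialForce m = 0 ↔ m ^ 4 = 1 - 4 * m ^ 2 := by
  have hplus : 1 + m ^ 2 ≠ 0 := by positivity
  have hminus : 1 - m ^ 2 ≠ 0 := sub_ne_zero.2 (Ne.symm hm1)
  have : axialForce m = (1 - 4 * m ^ 2 - m ^ 4) / (2 * m * (1 + m ^ 2) * (1 - m ^ 2)) := by
    unfold axialForce
    field_simp
    ring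
  rw [this, div_eq_zero_iff, or_iff_left (by positivity), sub_eq_zero, eq_comm]

lemma gradient_discHam_axial {m : ℝ} (hm0 : m ≠ 0) (hm1 : m ^ 2 ≠ 1) :
    gradient (fun p => discHam p (vec (-m) 0)) (vec m 0) = vec (π⁻¹ * axialForce m) 0 := by
  have hplus : 1 + m ^ 2 ≠ 0 := by positivity
  have hminus : 1 - m ^ 2 ≠ 0 := sub_ne_zero.2 (Ne.symm hm1)
  have hgrad := hasGradientAt_discHam_left (x := vec m 0) (y := vec (-m) 0)
    (by rw [← sub_ne_zero, vec_sub, Ne, vec_eq_zero_iff]; grind)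
    (by rw [norm_vec_sq, norm_vec_sq, inner_vec_left]; simp [vec_apply_zero]; nlinarith)
    (by rwa [norm_vec_sq, zero_pow two_ne_zero, add_zero])
  rw [hgrad.gradient]
  simp only [vec_sub, norm_vec_sq, inner_vec_left, vec_apply_zero, vec_apply_one, smul_vec]
  congr 1
  · unfold axialForce
    simp only [zero_pow two_ne_zero, add_zero, mul_zero, neg_sq]
    rw [show m ^ 2 * m ^ 2 - 2 * (m * -m) + 1 = (1 + m ^ 2) ^ 2 by ring]
    field_simp
    ring
  · simp

/-- `((μ,0),(-μ,0))` is critical for the disc Hamiltonian iff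
`μ⁴ = 1 - 4μ²`; in particular `μ = √(√5-2)` gives a critical point. -/
theorem statement15 (μ : ℝ) (hμ0 : 0 < μ) (hμ1 : μ < 1) :
    ((∀ k, pgrad discHamV ![vec μ 0, vec (-μ) 0] k = 0) ↔ μ ^ 4 = 1 - 4 * μ ^ 2) ∧
    (μ = Real.sqrt (Real.sqrt 5 - 2) →
      ∀ k, pgrad discHamV ![vec μ 0, vec (-μ) 0] k = 0) := by
  have hμ0' : μ ≠ 0 := hμ0.ne'
  have hμ1' : μ ^ 2 ≠ 1 := by nlinarith
  have hgrad₁ := gradient_discHam_axial (m := -μ) (neg_ne_zero.2 hμ0') (by rwa [neg_sq])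
  rw [neg_neg, axialForce_neg] at hgrad₁
  have hcrit : (∀ k, pgrad discHamV ![vec μ 0, vec (-μ) 0] k = 0) ↔ μ ^ 4 = 1 - 4 * μ ^ 2 := by
    rw [Fin.forall_fin_two, pgrad_discHamV_zero, pgrad_discHamV_one, hgrad₁,
      gradient_discHam_axial hμ0' hμ1', ← axialForce_eq_zero_iff hμ0' hμ1']
    simp [vec_eq_zero_iff, Real.pi_ne_zero]
  refine ⟨hcrit, fun hμ => hcrit.2 ?_⟩
  have hμsq : μ ^ 2 = Real.sqrt 5 - 2 := by
    rw [hμ, Real.sq_sqrt]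
    nlinarith [Real.sq_sqrt (show (0 : ℝ) ≤ 5 by norm_num), Real.sqrt_nonneg 5]
  nlinarith [Real.sq_sqrt (show (0 : ℝ) ≤ 5 by norm_num)]
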